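/- Let π be a partial representation of G on a Hilbert space E. Define σ_t(T) := π_t T π_{t⁻¹} on the Hilbert space L²(E) of Hilbert–Schmidt operators. Then σ is a partial representation of G on L²(E): σ_e = id, σ_{t⁻¹} σ_{ts} = σ_{t⁻¹} σ_t σ_s, and σ_t σ_s σ_{s⁻¹} = σ_{ts} σ_{s⁻¹} for all s, t ∈ G. -/
import Mathlib


/-- The conjugation family `σ_t(T) = π_t T π_{t⁻¹}` on operators. -/
def conjRep {G E : Type*} [Group G] [NormedAddCommGroup E] [InnerProductSpace ℂ E]
    (π : G → E →L[ℂ] E) (t : G) (T : E →L[ℂ] E) : E →L[ℂ] E :=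
  (π t).comp (T.comp (π t⁻¹))

/-- For a partial representation `π` of `G` on a Hilbert space `E`, the family
`σ_t(T) = π_t T π_{t⁻¹}` (acting on the Hilbert–Schmidt class) is again a partial
representation: `σ_e = id`, `σ_{t⁻¹} σ_{ts} = σ_{t⁻¹} σ_t σ_s` and
`σ_t σ_s σ_{s⁻¹} = σ_{ts} σ_{s⁻¹}`. -/
theorem conjugation_partial_representation
    {G E : Type*} [Group G] [NormedAddCommGroup E] [InnerProductSpace ℂ E]
    [CompleteSpace E]
    (π : G → E →L[ℂ] E)
    (hone : π 1 = ContinuousLinearMap.id ℂ E)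
    (hpiso : ∀ t : G, ∃ S : E →L[ℂ] E, ‖π t‖ ≤ 1 ∧ ‖S‖ ≤ 1 ∧
      S.comp ((π t).comp S) = S ∧ (π t).comp (S.comp (π t)) = π t)
    (hrel1 : ∀ s t : G, (π t).comp ((π s).comp (π s⁻¹)) = (π (t * s)).comp (π s⁻¹))
    (hrel2 : ∀ s t : G, (π t⁻¹).comp ((π t).comp (π s)) = (π t⁻¹).comp (π (t * s))) :
    (∀ T : E →L[ℂ] E, conjRep π 1 T = T) ∧
    (∀ (s t : G) (T : E →L[ℂ] E),
      conjRep π t⁻¹ (conjRep π (t * s) T) = conjRep π t⁻¹ (conjRep π t (conjRep π s T))) ∧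
    (∀ (s t : G) (T : E →L[ℂ] E),
      conjRep π t (conjRep π s (conjRep π s⁻¹ T)) = conjRep π (t * s) (conjRep π s⁻¹ T)) := by
  refine ⟨?_, ?_, ?_⟩
  · intro T; ext x; simp [conjRep, hone]
  · intro s t T
    ext x
    have h1 := ContinuousLinearMap.ext_iff.1 (hrel2 s t)
    have h2 := ContinuousLinearMap.ext_iff.1 (hrel1 t⁻¹ s⁻¹)
    simp only [conjRep, ContinuousLinearMap.comp_apply, mul_inv_rev, inv_inv] at *
    rw [← h2, h1]
  · intro s t T
    ext x
    have h1 := ContinuousLinearMap.ext_iff.1 (hrel1 s t)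
    have h2 := ContinuousLinearMap.ext_iff.1 (hrel2 t⁻¹ s⁻¹)
    simp only [conjRep, ContinuousLinearMap.comp_apply, mul_inv_rev, inv_inv] at *
    rw [h1, h2]
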